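/- Let V be a finite-dimensional F[H]-module such that the E[H]-module E ⊗_F V obtained by extension of scalars is multiplicity free. Then V is multiplicity free as an F[H]-module. -/

import Mathlib

/-- A module over a ring is multiplicity free if it is semisimple and no two distinct
simple submodules are isomorphic. -/
def MultiplicityFree (R M : Type*) [Ring R] [AddCommGroup M] [Module R M] : Prop :=
  IsSemisimpleModule R M ∧
    ∀ S T : Submodule R M, IsSimpleModule R S → IsSimpleModule R T →
      Nonempty (S ≃ₗ[R] T) → S = T

/-- The representation of `H` on `E ⊗[F] V` obtained from a representation of `H` on `V` by
extension of scalars from `F` to `E`. -/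
noncomputable def repBaseChange (F E : Type*) [Field F] [Field E] [Algebra F E]
    {H V : Type*} [Monoid H] [AddCommGroup V] [Module F V]
    (ρ : Representation F H V) : Representation E H (TensorProduct F E V) where
  toFun g := LinearMap.baseChange E (ρ g)
  map_one' := by simp only [map_one, LinearMap.baseChange_one]
  map_mul' g h := by simp only [map_mul, LinearMap.baseChange_mul]

noncomputable instance asModuleAddCommGroup {k G V : Type*} [CommSemiring k] [Monoid G]
    [AddCommGroup V] [Module k V] (ρ : Representation k G V) :
    AddCommGroup ρ.asModule :=
  inferInstanceAs (AddCommGroup V)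

/-!
A semisimple module is multiplicity free exactly when every submodule is invariant under every
endomorphism: an endomorphism maps a simple submodule to zero or to an isomorphic copy of it, and
conversely an isomorphism `S ≃ T` of simple submodules extends, through a complement of `S`, to an
endomorphism mapping `S` onto `T`.

Both semisimplicity and this invariance descend from `E ⊗[F] V` to `V` along an `F`-linear
functional `l : E → F` with `l 1 = 1`. The slice map `l ⊗ id : E ⊗[F] V → V` is `H`-equivariant,
sends `E ⊗ U` into `U` and `1 ⊗ u` to `u`; hence compressing an equivariant projection onto
`E ⊗ U` gives one onto `U`, and an endomorphism whose base change preserves `E ⊗ U` preserves `U`.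
-/

open TensorProduct

def IsDuoModule (R M : Type*) [Ring R] [AddCommGroup M] [Module R M] : Prop :=
  ∀ (f : Module.End R M) (N : Submodule R M), N.map f ≤ N

section MultiplicityFree

variable {R M : Type*} [Ring R] [AddCommGroup M] [Module R M]

theorem isSemisimpleModule_of_forall_exists_proj
    (h : ∀ U : Submodule R M, ∃ p : Module.End R M, (∀ x, p x ∈ U) ∧ ∀ u ∈ U, p u = u) :
    IsSemisimpleModule R M := by
  refine (isSemisimpleModule_iff R M).mpr ⟨fun U => ?_⟩
  obtain ⟨p, hpU, hp⟩ := h U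
  exact ⟨_, LinearMap.isCompl_of_proj (f := p.codRestrict U hpU) fun u => Subtype.ext (hp u u.2)⟩

theorem MultiplicityFree.map_le_of_isSimpleModule (hM : MultiplicityFree R M)
    (f : Module.End R M) (P : Submodule R M) [IsSimpleModule R P] : P.map f ≤ P := by
  rw [← LinearMap.range_domRestrict]
  rcases (f.domRestrict P).injective_or_eq_zero with hinj | hzero
  · have : IsSimpleModule R (LinearMap.range (f.domRestrict P)) :=
      IsSimpleModule.congr (LinearEquiv.ofInjective _ hinj).symm
    exact (hM.2 _ P this ‹_› ⟨(LinearEquiv.ofInjective _ hinj).symm⟩).le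
  · simp [hzero]

theorem MultiplicityFree.isDuoModule (hM : MultiplicityFree R M) : IsDuoModule R M := by
  intro f N
  have := hM.1
  calc N.map f = (sSup {P : Submodule R M | IsSimpleModule R P ∧ P ≤ N}).map f := by
        rw [IsSemisimpleModule.sSup_simples_le]
    _ ≤ N := Submodule.map_le_iff_le_comap.mpr <| sSup_le fun P ⟨_, hPN⟩ =>
        Submodule.map_le_iff_le_comap.mp ((hM.map_le_of_isSimpleModule f P).trans hPN)

theorem IsDuoModule.multiplicityFree [IsSemisimpleModule R M] (hM : IsDuoModule R M) :
    MultiplicityFree R M := by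
  refine ⟨‹_›, fun S T hS hT ⟨e⟩ => ?_⟩
  obtain ⟨S', hSS'⟩ := exists_isCompl S
  let f : Module.End R M := T.subtype ∘ₗ e.toLinearMap ∘ₗ S.projectionOnto S' hSS'
  have hTS : T ≤ S := fun t ht => hM f S ⟨e.symm ⟨t, ht⟩, (e.symm ⟨t, ht⟩).2, by
    simp [f, Submodule.projectionOnto_apply_left]⟩
  have hSatom := isSimpleModule_iff_isAtom.mp hS
  exact ((hSatom.le_iff_eq (isSimpleModule_iff_isAtom.mp hT).1).mp hTS).symm

theorem multiplicityFree_iff :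
    MultiplicityFree R M ↔ IsSemisimpleModule R M ∧ IsDuoModule R M :=
  ⟨fun h => ⟨h.1, h.isDuoModule⟩, fun ⟨_, h⟩ => h.multiplicityFree⟩

end MultiplicityFree

theorem exists_linearMap_apply_one_eq_one (F E : Type*) [Field F] [Ring E] [Nontrivial E]
    [Algebra F E] : ∃ l : E →ₗ[F] F, l 1 = 1 := by
  obtain ⟨l, hl⟩ := (Algebra.linearMap F E).exists_leftInverse_of_injective
    (LinearMap.ker_eq_bot.mpr (algebraMap F E).injective)
  exact ⟨l, by simpa using DFunLike.congr_fun hl 1⟩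

section SliceMap

variable {F E V W : Type*} [CommSemiring F] [Semiring E] [Algebra F E] [AddCommMonoid V]
  [Module F V] [AddCommMonoid W] [Module F W]

variable (V) in
noncomputable def LinearMap.sliceLeft (l : E →ₗ[F] F) : E ⊗[F] V →ₗ[F] V :=
  TensorProduct.lid F V ∘ₗ l.rTensor V

@[simp]
theorem LinearMap.sliceLeft_tmul (l : E →ₗ[F] F) (e : E) (v : V) :
    l.sliceLeft V (e ⊗ₜ v) = l e • v := by
  simp [sliceLeft]

theorem LinearMap.sliceLeft_baseChange (l : E →ₗ[F] F) (f : V →ₗ[F] W) (x : E ⊗[F] V) :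
    l.sliceLeft W (f.baseChange E x) = f (l.sliceLeft V x) := by
  induction x using TensorProduct.induction_on with
  | zero => simp
  | tmul e v => simp
  | add x y hx hy => simp only [map_add, hx, hy]

theorem Submodule.sliceLeft_mem_of_mem_baseChange (l : E →ₗ[F] F) {p : Submodule F V}
    {x : E ⊗[F] V} (hx : x ∈ p.baseChange E) : l.sliceLeft V x ∈ p := by
  obtain ⟨y, rfl⟩ := hx
  rw [LinearMap.sliceLeft_baseChange]
  exact Subtype.property _

end SliceMap

section BaseChange

variable {F E : Type*} [Field F] [Field E] [Algebra F E] {H V W : Type*} [Monoid H]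
  [AddCommGroup V] [Module F V] [AddCommGroup W] [Module F W]
  {ρ : Representation F H V} {ρ' : Representation F H W}

theorem repBaseChange_apply (g : H) : repBaseChange F E ρ g = (ρ g).baseChange E := rfl

variable (E) in
def Subrepresentation.baseChange (U : Subrepresentation ρ) :
    Subrepresentation (repBaseChange F E ρ) where
  toSubmodule := U.toSubmodule.baseChange E
  apply_mem_toSubmodule g := by
    rintro _ ⟨x, rfl⟩
    refine ⟨((ρ g).restrict (U.apply_mem_toSubmodule g)).baseChange E x, ?_⟩
    rw [repBaseChange_apply, ← LinearMap.comp_apply, ← LinearMap.baseChange_comp,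
      ← LinearMap.comp_apply, ← LinearMap.baseChange_comp]
    rfl

namespace Representation.IntertwiningMap

variable (E) in
noncomputable def baseChange (f : IntertwiningMap ρ ρ') :
    IntertwiningMap (repBaseChange F E ρ) (repBaseChange F E ρ') where
  toLinearMap := f.toLinearMap.baseChange E
  isIntertwining' g := by
    rw [repBaseChange_apply, repBaseChange_apply, ← LinearMap.baseChange_comp,
      ← LinearMap.baseChange_comp, f.isIntertwining']

theorem baseChange_tmul (f : IntertwiningMap ρ ρ') (e : E) (v : V) :
    f.baseChange E (e ⊗ₜ v) = e ⊗ₜ f v := rfl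

noncomputable def compress (l : E →ₗ[F] F)
    (π : IntertwiningMap (repBaseChange F E ρ) (repBaseChange F E ρ')) : IntertwiningMap ρ ρ' :=
  LinearMap.intertwiningMap_of_isIntertwiningMap ρ ρ'
    (l.sliceLeft W ∘ₗ π.toLinearMap.restrictScalars F ∘ₗ TensorProduct.mk F E V 1)
    fun g v => by
      change l.sliceLeft W (π (repBaseChange F E ρ g (1 ⊗ₜ v))) = _
      rw [π.isIntertwining, repBaseChange_apply, LinearMap.sliceLeft_baseChange]
      rfl

theorem compress_apply (l : E →ₗ[F] F)
    (π : IntertwiningMap (repBaseChange F E ρ) (repBaseChange F E ρ')) (v : V) :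
    π.compress l v = l.sliceLeft W (π (1 ⊗ₜ v)) := rfl

end Representation.IntertwiningMap

open Representation

theorem Subrepresentation.exists_projection_of_isSemisimpleModule_repBaseChange
    (h : IsSemisimpleModule (MonoidAlgebra E H) (repBaseChange F E ρ).asModule)
    (U : Subrepresentation ρ) :
    ∃ p : IntertwiningMap ρ ρ, (∀ v, p v ∈ U) ∧ ∀ u ∈ U, p u = u := by
  obtain ⟨l, hl⟩ := exists_linearMap_apply_one_eq_one F E
  let Ũ := (U.baseChange E).asSubmodule
  obtain ⟨W, hW⟩ := h.exists_isCompl Ũ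
  -- Naming `E` lets Lean match the derived `AddCommMonoid` of `asModule` with `AddCommGroup`'s.
  let π := (IntertwiningMap.equivLinearMapAsModule _ _).symm
    (Ũ.subtype ∘ₗ Submodule.projectionOnto (E := (repBaseChange F E ρ).asModule) Ũ W hW)
  have hπU (x : E ⊗[F] V) : π x ∈ U.toSubmodule.baseChange E :=
    (Submodule.projectionOnto (E := (repBaseChange F E ρ).asModule) Ũ W hW x).2
  have hπ (u : V) (hu : u ∈ U) : π (1 ⊗ₜ u) = 1 ⊗ₜ u := by
    have hmem : ((1 : E) ⊗ₜ[F] u : E ⊗[F] V) ∈ Ũ := Submodule.tmul_mem_baseChange_of_mem 1 hu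
    exact congrArg Subtype.val
      (Submodule.projectionOnto_apply_left (E := (repBaseChange F E ρ).asModule) hW ⟨_, hmem⟩)
  refine ⟨π.compress l, fun v => Submodule.sliceLeft_mem_of_mem_baseChange l (hπU _),
    fun u hu => ?_⟩
  rw [IntertwiningMap.compress_apply, hπ u hu, LinearMap.sliceLeft_tmul, hl, one_smul]

theorem Subrepresentation.mapsTo_of_mapsTo_baseChange (U : Subrepresentation ρ)
    (φ : IntertwiningMap ρ ρ)
    (hφ : Set.MapsTo (φ.baseChange E) (U.baseChange E) (U.baseChange E)) :
    Set.MapsTo φ U U := by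
  obtain ⟨l, hl⟩ := exists_linearMap_apply_one_eq_one F E
  intro u hu
  have hmem := Submodule.sliceLeft_mem_of_mem_baseChange l
    (hφ (Submodule.tmul_mem_baseChange_of_mem 1 hu))
  rwa [IntertwiningMap.baseChange_tmul, LinearMap.sliceLeft_tmul, hl, one_smul] at hmem

theorem isSemisimpleModule_asModule_of_repBaseChange
    (h : IsSemisimpleModule (MonoidAlgebra E H) (repBaseChange F E ρ).asModule) :
    IsSemisimpleModule (MonoidAlgebra F H) ρ.asModule := by
  refine isSemisimpleModule_of_forall_exists_proj fun U => ?_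
  obtain ⟨p, hpU, hp⟩ :=
    (Subrepresentation.ofSubmodule' U).exists_projection_of_isSemisimpleModule_repBaseChange h
  exact ⟨IntertwiningMap.equivLinearMapAsModule _ _ p, hpU, hp⟩

theorem isDuoModule_asModule_of_repBaseChange
    (h : IsDuoModule (MonoidAlgebra E H) (repBaseChange F E ρ).asModule) :
    IsDuoModule (MonoidAlgebra F H) ρ.asModule := by
  rintro f U _ ⟨u, hu, rfl⟩
  let U' := Subrepresentation.ofSubmodule' U
  let φ := (IntertwiningMap.equivLinearMapAsModule ρ ρ).symm f
  exact U'.mapsTo_of_mapsTo_baseChange φ (fun x hx =>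
    h (IntertwiningMap.equivLinearMapAsModule _ _ (φ.baseChange E)) (U'.baseChange E).asSubmodule
      ⟨x, hx, rfl⟩) hu

end BaseChange

theorem statement_16_general (F E : Type*) [Field F] [Field E] [Algebra F E]
    (H : Type*) [Group H]
    (V : Type*) [AddCommGroup V] [Module F V]
    (ρ : Representation F H V)
    (h : MultiplicityFree (MonoidAlgebra E H) (repBaseChange F E ρ).asModule) :
    MultiplicityFree (MonoidAlgebra F H) ρ.asModule := by
  rw [multiplicityFree_iff] at h ⊢
  exact ⟨isSemisimpleModule_asModule_of_repBaseChange h.1,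
    isDuoModule_asModule_of_repBaseChange h.2⟩

/-- Let `F ⊆ E` be a field extension and `H` a finite group.  If the `E[H]`-module
`E ⊗_F V` obtained from a finite-dimensional `F[H]`-module `V` by extension of scalars is
multiplicity free, then `V` is multiplicity free as an `F[H]`-module. -/
theorem statement_16 (F E : Type*) [Field F] [Field E] [Algebra F E]
    (H : Type*) [Group H] [Finite H]
    (V : Type*) [AddCommGroup V] [Module F V] [FiniteDimensional F V]
    (ρ : Representation F H V)
    (h : MultiplicityFree (MonoidAlgebra E H) (repBaseChange F E ρ).asModule) :
    MultiplicityFree (MonoidAlgebra F H) ρ.asModule :=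
  statement_16_general F E H V ρ h
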